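/- Let ℓ, k, m be natural numbers with 1 ≤ m, m ≤ k+1 and m ≤ ℓ+1. Then, as integers, ∑_{r=1}^{m} (−1)^{r−1} · C(ℓ+1−r, k+1) · C(m, r) = C(ℓ+1, k+1) − C(ℓ+1−m, k+1−m). -/
import Mathlib

private lemma simplex_aux (k : ℕ) : ∀ m n : ℕ, m ≤ k + 1 → m ≤ n →
    (∑ r ∈ Finset.range (m + 1),
        (-1 : ℤ) ^ r * ((n - r).choose (k + 1) : ℤ) * (m.choose r : ℤ))
      = ((n - m).choose (k + 1 - m) : ℤ) := by
  intro m
  induction m with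
  | zero => intro n _ _; simp
  | succ m ih =>
    intro n h1 h2
    have hmn : m ≤ n - 1 := by omega
    have hmk : m ≤ k + 1 := by omega
    have hA := ih (n - 1) hmk hmn
    have hT := ih n hmk (by omega)
    -- rewrite the sum
    rw [Finset.sum_range_succ']
    have hsub : ∀ r : ℕ, n - (r + 1) = n - 1 - r := by
      intro r; omega
    have key : (∑ r ∈ Finset.range (m + 1),
        (-1 : ℤ) ^ (r + 1) * ((n - (r + 1)).choose (k + 1) : ℤ) * ((m + 1).choose (r + 1) : ℤ))
        = -(((n - 1 - m).choose (k + 1 - m) : ℤ))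
          + (((n - m).choose (k + 1 - m) : ℤ) - ((n).choose (k + 1) : ℤ)) := by
      have expand : ∀ r ∈ Finset.range (m + 1),
          (-1 : ℤ) ^ (r + 1) * ((n - (r + 1)).choose (k + 1) : ℤ) * ((m + 1).choose (r + 1) : ℤ)
          = -((-1 : ℤ) ^ r * ((n - 1 - r).choose (k + 1) : ℤ) * (m.choose r : ℤ))
            + (-1 : ℤ) ^ (r + 1) * ((n - 1 - r).choose (k + 1) : ℤ) * (m.choose (r + 1) : ℤ) := by
        intro r _
        rw [hsub r, Nat.choose_succ_succ]
        push_cast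
        ring
      rw [Finset.sum_congr rfl expand, Finset.sum_add_distrib, Finset.sum_neg_distrib, hA]
      congr 1
      -- second sum equals T(n,m) - C(n,k+1)
      have hB : (∑ r ∈ Finset.range (m + 1),
          (-1 : ℤ) ^ (r + 1) * ((n - 1 - r).choose (k + 1) : ℤ) * (m.choose (r + 1) : ℤ))
          = ∑ r ∈ Finset.range m,
          (-1 : ℤ) ^ (r + 1) * ((n - (r + 1)).choose (k + 1) : ℤ) * (m.choose (r + 1) : ℤ) := by
        rw [Finset.sum_range_succ]
        simp only [Nat.choose_succ_self, Nat.cast_zero, mul_zero, add_zero]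
        exact Finset.sum_congr rfl fun r _ => by rw [hsub r]
      rw [hB]
      have := Finset.sum_range_succ' (fun r =>
        (-1 : ℤ) ^ r * ((n - r).choose (k + 1) : ℤ) * (m.choose r : ℤ)) m
      rw [this] at hT
      simp only [pow_zero, Nat.sub_zero, Nat.choose_zero_right, Nat.cast_one, one_mul,
        mul_one] at hT
      linarith
    rw [key]
    simp only [pow_zero, Nat.sub_zero, Nat.choose_zero_right, Nat.cast_one, one_mul, mul_one]
    -- Pascal: C(n-m, k+1-m) = C(n-m-1, k-m) + C(n-m-1, k+1-m)
    have h3 : n - m = (n - (m + 1)) + 1 := by omega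
    have h4 : k + 1 - m = (k + 1 - (m + 1)) + 1 := by omega
    have h5 : n - 1 - m = n - (m + 1) := by omega
    rw [h3, h4, h5, Nat.choose_succ_succ]
    push_cast
    ring

/-- The binomial identity underlying the case `m ≤ k+1` of the simplex Lemma:
for `1 ≤ m ≤ k+1` and `m ≤ ℓ+1`,
`∑_{r=1}^{m} (-1)^{r-1} C(ℓ+1-r, k+1) C(m, r) = C(ℓ+1, k+1) - C(ℓ+1-m, k+1-m)`
as integers. -/
theorem simplex_lemma_binomial_identity_small (ℓ k m : ℕ) (hm : 1 ≤ m)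
    (hmk : m ≤ k + 1) (hmℓ : m ≤ ℓ + 1) :
    (∑ r ∈ Finset.Icc 1 m,
        (-1 : ℤ) ^ (r - 1) * ((ℓ + 1 - r).choose (k + 1) : ℤ) * (m.choose r : ℤ))
      = ((ℓ + 1).choose (k + 1) : ℤ) - ((ℓ + 1 - m).choose (k + 1 - m) : ℤ) := by
  have hT := simplex_aux k m (ℓ + 1) hmk hmℓ
  rw [Finset.sum_range_succ' (fun r =>
      (-1 : ℤ) ^ r * ((ℓ + 1 - r).choose (k + 1) : ℤ) * (m.choose r : ℤ)) m] at hT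
  simp only [pow_zero, Nat.sub_zero, Nat.choose_zero_right, Nat.cast_one, one_mul,
    mul_one] at hT
  have hIcc : (∑ r ∈ Finset.Icc 1 m,
      (-1 : ℤ) ^ (r - 1) * ((ℓ + 1 - r).choose (k + 1) : ℤ) * (m.choose r : ℤ))
      = ∑ r ∈ Finset.range m,
      (-1 : ℤ) ^ r * ((ℓ + 1 - (r + 1)).choose (k + 1) : ℤ) * (m.choose (r + 1) : ℤ) := by
    rw [show Finset.Icc 1 m = Finset.Ico 1 (m + 1) by rfl, Finset.sum_Ico_eq_sum_range]
    simp only [Nat.add_sub_cancel]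
    refine Finset.sum_congr rfl fun r _ => ?_
    rw [Nat.add_comm 1 r]
    simp
  rw [hIcc]
  have hsign : (∑ r ∈ Finset.range m,
      (-1 : ℤ) ^ r * ((ℓ + 1 - (r + 1)).choose (k + 1) : ℤ) * (m.choose (r + 1) : ℤ))
      = -∑ r ∈ Finset.range m,
      (-1 : ℤ) ^ (r + 1) * ((ℓ + 1 - (r + 1)).choose (k + 1) : ℤ) * (m.choose (r + 1) : ℤ) := by
    rw [← Finset.sum_neg_distrib]
    refine Finset.sum_congr rfl fun r _ => ?_
    ring
  rw [hsign]
  linarith
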